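/- Let E_1, E_2 be Banach lattices such that, for i = 1, 2, every norm-bounded disjoint sequence of positive elements of E_i is weakly null (equivalently, the norms of E_1* and E_2* are order continuous), and let F be a Banach lattice such that F* has the dual positive Schur property. Let A : E_1 × E_2 → F be a positive almost Dunford–Pettis continuous bilinear operator. Then the Aron–Berner extensions of A, namely A*** : E_1** × E_2** → F** given by A***(x**, y**)(y*) = x**( z ↦ y**( w ↦ y*(A(z,w)))) and AB(A) : E_1** × E_2** → F** given by AB(A)(x**, y**)(y*) = y**( w ↦ x**( z ↦ y*(A(z,w)))), are weakly positively limited: ‖A***(x_n**, y_n**)‖ → 0 and ‖AB(A)(x_n**, y_n**)‖ → 0 whenever (x_n**), (y_n**) are sequences of positive elements of E_1**, E_2** respectively and one of them is weak*-null while the other is norm bounded. -/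

import Mathlib

/-!
Both extensions take positive values, so by the dual positive Schur property of `F*` it suffices
that they are weak*-null. Writing a functional `g` on `F` as a difference of positive ones
(Riesz–Kantorovich), this reduces to `x_n** (y_n** ∘ K) → 0` for the positive almost
Dunford–Pettis form `K = g ∘ A`.

The heart is a domination lemma: for each `δ > 0` some positive `f ∈ E₁*` satisfies
`‖K w‖ ≤ f w + δ ‖w‖` for `w ≥ 0`. Otherwise there are positive unit vectors `w_k, b_k` with
`K (w_k, b_k) ≥ δ + 4 ^ k ∑_{i<k} K (w_k, b_i)`; disjointifying the `b_k`, and then a subsequence of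
the `w_k`, produces disjoint sequences, weakly null by the hypothesis on `E₁, E₂`, on which `K`
stays above about `δ / 2`, contradicting the almost Dunford–Pettis property. Dominating `K` or its
flip, according to which sequence is weak*-null, the bounded sequence then costs only `O(δ)` and
the weak*-null one is tested against the fixed functional `f`.
-/

noncomputable section

open Filter Topology NormedSpace

/-- A sequence in a Banach lattice is disjoint if `|x n| ⊓ |x k| = 0` for `n ≠ k`. -/
def DisjointSeq {E : Type*} [NormedAddCommGroup E] [Lattice E] [IsOrderedAddMonoid E] [HasSolidNorm E] (x : ℕ → E) : Prop :=
  ∀ n k, n ≠ k → |x n| ⊓ |x k| = 0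

/-- A sequence is weakly null if `f (x n) → 0` for every continuous linear functional `f`. -/
def WeaklyNull {E : Type*} [NormedAddCommGroup E] [NormedSpace ℝ E] (x : ℕ → E) : Prop :=
  ∀ f : E →L[ℝ] ℝ, Tendsto (fun n => f (x n)) atTop (𝓝 0)

/-- A continuous linear functional on a Banach lattice is positive if it takes nonnegative
values at positive elements. -/
def PosFunctional {E : Type*} [NormedAddCommGroup E] [Lattice E] [IsOrderedAddMonoid E] [HasSolidNorm E] [NormedSpace ℝ E]
    (f : StrongDual ℝ E) : Prop :=
  ∀ x : E, 0 ≤ x → 0 ≤ f x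

/-- An element of the bidual of a Banach lattice is positive if it takes nonnegative values
at positive functionals. -/
def PosBidual {E : Type*} [NormedAddCommGroup E] [Lattice E] [IsOrderedAddMonoid E] [HasSolidNorm E] [NormedSpace ℝ E]
    (Φ : StrongDual ℝ (StrongDual ℝ E)) : Prop :=
  ∀ f : StrongDual ℝ E, PosFunctional f → 0 ≤ Φ f

/-- A sequence in the bidual is weak*-null if it converges to `0` pointwise on the dual. -/
def WeakStarNull {E : Type*} [NormedAddCommGroup E] [NormedSpace ℝ E]
    (Φ : ℕ → StrongDual ℝ (StrongDual ℝ E)) : Prop :=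
  ∀ f : StrongDual ℝ E, Tendsto (fun n => Φ n f) atTop (𝓝 0)

/-- The Aron-Berner extension of a continuous bilinear operator `A : E₁ × E₂ → F` (in
curried form), given by `arensBil A x** y** (y*) = x** (z ↦ y** (w ↦ y* (A z w)))`. -/
def arensBil {E₁ E₂ F : Type*} [NormedAddCommGroup E₁] [NormedSpace ℝ E₁]
    [NormedAddCommGroup E₂] [NormedSpace ℝ E₂] [NormedAddCommGroup F] [NormedSpace ℝ F]
    (A : E₁ →L[ℝ] E₂ →L[ℝ] F) (xbb : StrongDual ℝ (StrongDual ℝ E₁)) (ybb : StrongDual ℝ (StrongDual ℝ E₂)) :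
    StrongDual ℝ (StrongDual ℝ F) :=
  xbb.comp ((ContinuousLinearMap.compL ℝ E₁ (E₂ →L[ℝ] ℝ) ℝ ybb).comp
    (((ContinuousLinearMap.compL ℝ E₁ (E₂ →L[ℝ] F) (E₂ →L[ℝ] ℝ)).flip A).comp
      (ContinuousLinearMap.compL ℝ E₂ F ℝ)))

/-- The defining formula of `arensBil`:  `y* ∘ A : E₁ →L E₂* ` is `z ↦ y* ∘ (A z)`, and
`arensBil A x** y** (y*) = x** (y** ∘ (y* ∘ A)) = x** (z ↦ y** (w ↦ y* (A z w)))`. -/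
theorem arensBil_apply {E₁ E₂ F : Type*} [NormedAddCommGroup E₁] [NormedSpace ℝ E₁]
    [NormedAddCommGroup E₂] [NormedSpace ℝ E₂] [NormedAddCommGroup F] [NormedSpace ℝ F]
    (A : E₁ →L[ℝ] E₂ →L[ℝ] F) (xbb : StrongDual ℝ (StrongDual ℝ E₁)) (ybb : StrongDual ℝ (StrongDual ℝ E₂))
    (g : StrongDual ℝ F) :
    arensBil A xbb ybb g =
      xbb (ybb.comp ((ContinuousLinearMap.compL ℝ E₂ F ℝ g).comp A)) := rfl


open scoped Pointwise

theorem nonneg_of_two_pow_nsmul_nonneg {G : Type*} [AddCommGroup G] [Lattice G]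
    [IsOrderedAddMonoid G] {y : G} (m : ℕ) (h : 0 ≤ 2 ^ m • y) : 0 ≤ y := by
  induction m generalizing y with
  | zero => simpa using h
  | succ m ih => exact nsmul_two_semiclosed (ih (by rwa [pow_succ, mul_nsmul'] at h))

section NormedLattice

variable {E : Type*} [NormedAddCommGroup E] [Lattice E] [IsOrderedAddMonoid E] [HasSolidNorm E]

theorem norm_le_norm_of_nonneg_of_le {a b : E} (ha : 0 ≤ a) (hab : a ≤ b) : ‖a‖ ≤ ‖b‖ :=
  norm_le_norm_of_abs_le_abs (by rwa [abs_of_nonneg ha, abs_of_nonneg (ha.trans hab)])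

theorem norm_posPart_le_norm (x : E) : ‖x⁺‖ ≤ ‖x‖ := by
  rw [← norm_abs_eq_norm x, ← posPart_add_negPart]
  exact norm_le_norm_of_nonneg_of_le (posPart_nonneg x) (le_add_of_nonneg_right (negPart_nonneg x))

theorem norm_negPart_le_norm (x : E) : ‖x⁻‖ ≤ ‖x‖ := by
  simpa using norm_posPart_le_norm (-x)

variable [NormedSpace ℝ E]

/-- Dyadic multiples of a positive vector are positive, and the positive cone is closed. -/
theorem smul_nonneg_of_hasSolidNorm {c : ℝ} (hc : 0 ≤ c) {x : E} (hx : 0 ≤ x) : 0 ≤ c • x := by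
  have hdyadic : ∀ m k : ℕ, 0 ≤ ((k : ℝ) / 2 ^ m) • x := fun m k => by
    refine nonneg_of_two_pow_nsmul_nonneg m ?_
    rw [← Nat.cast_smul_eq_nsmul ℝ, smul_smul, Nat.cast_pow, Nat.cast_ofNat,
      mul_div_cancel₀ _ (by positivity), Nat.cast_smul_eq_nsmul]
    exact nsmul_nonneg hx k
  have hlim : Tendsto (fun m : ℕ => ((⌊c * 2 ^ m⌋₊ : ℝ) / 2 ^ m) • x) atTop (𝓝 (c • x)) :=
    ((tendsto_nat_floor_mul_div_atTop hc).comp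
      (tendsto_pow_atTop_atTop_of_one_lt one_lt_two)).smul_const x
  exact isClosed_nonneg.mem_of_tendsto hlim (Eventually.of_forall fun m => hdyadic m _)

instance HasSolidNorm.isOrderedModule : IsOrderedModule ℝ E :=
  .of_smul_nonneg fun _ hc _ hx => smul_nonneg_of_hasSolidNorm hc hx

theorem posPart_inf_smul_negPart (x : E) {r : ℝ} (hr : 0 ≤ r) : x⁺ ⊓ r • x⁻ = 0 := by
  set R := max 1 r
  have hR : 0 < R := lt_max_of_lt_left one_pos
  refine le_antisymm ?_ (le_inf (posPart_nonneg x) (smul_nonneg hr (negPart_nonneg x)))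
  calc x⁺ ⊓ r • x⁻ ≤ R • x⁺ ⊓ R • x⁻ :=
        inf_le_inf (le_smul_of_one_le_left (posPart_nonneg x) (le_max_left 1 r))
          (smul_le_smul_of_nonneg_right (le_max_right 1 r) (negPart_nonneg x))
    _ = R • (x⁺ ⊓ x⁻) := ((OrderIso.smulRight hR).map_inf _ _).symm
    _ = 0 := by rw [posPart_inf_negPart_eq_zero, smul_zero]

theorem posPart_sub_smul_inf_posPart_sub_smul {a b : E} (ha : 0 ≤ a) {c c' : ℝ} (hc : 0 < c)
    (hcc' : 1 ≤ c * c') : (a - c • b)⁺ ⊓ (b - c' • a)⁺ = 0 := by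
  set s := a - c • b
  have hle : b - c' • a ≤ c⁻¹ • s⁻ := by
    calc b - c' • a ≤ b - c⁻¹ • a :=
          sub_le_sub_left (smul_le_smul_of_nonneg_right ((inv_le_iff_one_le_mul₀' hc).2 hcc') ha) b
      _ = c⁻¹ • -s := by simp [s, smul_sub, smul_smul, inv_mul_cancel₀ hc.ne']
      _ ≤ c⁻¹ • s⁻ := smul_le_smul_of_nonneg_left (neg_le_negPart s) (inv_nonneg.2 hc.le)
  refine le_antisymm ?_ (le_inf (posPart_nonneg _) (posPart_nonneg _))
  calc s⁺ ⊓ (b - c' • a)⁺ ≤ s⁺ ⊓ c⁻¹ • s⁻ :=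
        inf_le_inf_left _ (sup_le hle (smul_nonneg (inv_nonneg.2 hc.le) (negPart_nonneg s)))
    _ = 0 := posPart_inf_smul_negPart s (inv_nonneg.2 hc.le)

end NormedLattice

theorem exists_hasSum_half_pow_smul {E : Type*} [NormedAddCommGroup E] [NormedSpace ℝ E]
    [CompleteSpace E] {v : ℕ → E} (hv : ∀ k, ‖v k‖ ≤ 1) :
    ∃ u, HasSum (fun i => (1 / 2 : ℝ) ^ i • v i) u ∧ ‖u‖ ≤ 2 := by
  have hbound : ∀ i, ‖(1 / 2 : ℝ) ^ i • v i‖ ≤ (1 / 2) ^ i := fun i => by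
    rw [norm_smul, norm_pow, norm_div, norm_one, Real.norm_two]
    exact mul_le_of_le_one_right (by positivity) (hv i)
  have hsum := Summable.of_norm_bounded hasSum_geometric_two.summable hbound
  exact ⟨_, hsum.hasSum, hsum.hasSum.norm_le_of_bounded hasSum_geometric_two hbound⟩

section Disjointification

variable {E : Type*} [NormedAddCommGroup E] [Lattice E] [IsOrderedAddMonoid E] [HasSolidNorm E]
  [NormedSpace ℝ E]

/-- When `2⁻ᵏ v k ≤ u` for all `k`, then for `i < k` the term `disjointify v u i` lies below
`(v i - 2^-(i+k) v k)⁺` and `disjointify v u k` below `(v k - 4 ^ k v i)⁺`, and these are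
disjoint. -/
def disjointify (v : ℕ → E) (u : E) (k : ℕ) : E :=
  (v k - (4 : ℝ) ^ k • ∑ i ∈ Finset.range k, v i - (1 / 2 : ℝ) ^ k • u)⁺

variable {v : ℕ → E} {u : E}

theorem disjointify_le (hv : ∀ k, 0 ≤ v k) (hu : 0 ≤ u) (k : ℕ) : disjointify v u k ≤ v k :=
  sup_le ((sub_le_self _ (smul_nonneg (by positivity) hu)).trans
    (sub_le_self _ (smul_nonneg (by positivity) (Finset.sum_nonneg fun i _ => hv i)))) (hv k)

theorem disjointify_inf_eq_zero (hv : ∀ k, 0 ≤ v k) (hu : 0 ≤ u)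
    (hvu : ∀ k, (1 / 2 : ℝ) ^ k • v k ≤ u) {i k : ℕ} (hik : i < k) :
    disjointify v u i ⊓ disjointify v u k = 0 := by
  have hwi : v i - (4 : ℝ) ^ i • ∑ l ∈ Finset.range i, v l - (1 / 2 : ℝ) ^ i • u ≤
      v i - (1 / 2 : ℝ) ^ (i + k) • v k := by
    calc _ ≤ v i - (1 / 2 : ℝ) ^ i • u := sub_le_sub_right
          (sub_le_self _ (smul_nonneg (by positivity) (Finset.sum_nonneg fun l _ => hv l))) _
      _ ≤ v i - (1 / 2 : ℝ) ^ (i + k) • v k := by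
          rw [pow_add, mul_smul]
          exact sub_le_sub_left (smul_le_smul_of_nonneg_left (hvu k) (by positivity)) _
  have hwk : v k - (4 : ℝ) ^ k • ∑ l ∈ Finset.range k, v l - (1 / 2 : ℝ) ^ k • u ≤
      v k - (4 : ℝ) ^ k • v i := by
    calc _ ≤ v k - (4 : ℝ) ^ k • ∑ l ∈ Finset.range k, v l :=
          sub_le_self _ (smul_nonneg (by positivity) hu)
      _ ≤ v k - (4 : ℝ) ^ k • v i := sub_le_sub_left (smul_le_smul_of_nonneg_left
          (Finset.single_le_sum (fun l _ => hv l) (Finset.mem_range.2 hik)) (by positivity)) _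
  have hcoeff : 1 ≤ (1 / 2 : ℝ) ^ (i + k) * 4 ^ k := by
    calc (1 : ℝ) = (1 / 2) ^ (k + k) * 4 ^ k := by rw [← two_mul, pow_mul, ← mul_pow]; norm_num
      _ ≤ (1 / 2) ^ (i + k) * 4 ^ k :=
        mul_le_mul_of_nonneg_right (pow_le_pow_of_le_one (by norm_num) (by norm_num) (by omega))
          (by positivity)
  refine le_antisymm ?_ (le_inf (posPart_nonneg _) (posPart_nonneg _))
  calc disjointify v u i ⊓ disjointify v u k
      ≤ (v i - (1 / 2 : ℝ) ^ (i + k) • v k)⁺ ⊓ (v k - (4 : ℝ) ^ k • v i)⁺ :=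
        inf_le_inf (posPart_mono hwi) (posPart_mono hwk)
    _ = 0 := posPart_sub_smul_inf_posPart_sub_smul (hv i) (by positivity) hcoeff

theorem disjointSeq_disjointify (hv : ∀ k, 0 ≤ v k) (hu : 0 ≤ u)
    (hvu : ∀ k, (1 / 2 : ℝ) ^ k • v k ≤ u) : DisjointSeq (disjointify v u) := by
  intro n k hnk
  simp only [disjointify, abs_of_nonneg (posPart_nonneg _)]
  rcases hnk.lt_or_gt with h | h
  · exact disjointify_inf_eq_zero hv hu hvu h
  · rw [inf_comm]; exact disjointify_inf_eq_zero hv hu hvu h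

theorem sub_le_apply_disjointify {g : StrongDual ℝ E} (hg : PosFunctional g) (k : ℕ) :
    g (v k) - 4 ^ k * ∑ i ∈ Finset.range k, g (v i) - (1 / 2) ^ k * g u ≤
      g (disjointify v u k) := by
  have hpos := hg _ (sub_nonneg.2 (le_posPart
    (v k - (4 : ℝ) ^ k • ∑ i ∈ Finset.range k, v i - (1 / 2 : ℝ) ^ k • u)))
  simp only [map_sub, map_smul, map_sum, smul_eq_mul] at hpos
  simp only [disjointify]
  linarith

theorem exists_disjoint_of_diagonal_dominant [CompleteSpace E] {φ : ℕ → StrongDual ℝ E}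
    (hφ : ∀ k, PosFunctional (φ k)) {M : ℝ} (hM : ∀ k, ‖φ k‖ ≤ M)
    (hv : ∀ k, 0 ≤ v k ∧ ‖v k‖ ≤ 1) {δ : ℕ → ℝ}
    (hdiag : ∀ k, δ k ≤ φ k (v k) - 4 ^ k * ∑ i ∈ Finset.range k, φ k (v i)) :
    ∃ D : ℕ → E, (∀ k, 0 ≤ D k ∧ ‖D k‖ ≤ 1) ∧ DisjointSeq D ∧
      ∀ k, δ k - (1 / 2) ^ k * (2 * M) ≤ φ k (D k) := by
  obtain ⟨u, hu, hu2⟩ := exists_hasSum_half_pow_smul fun k => (hv k).2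
  have hterm : ∀ i, 0 ≤ (1 / 2 : ℝ) ^ i • v i := fun i => smul_nonneg (by positivity) (hv i).1
  have hu0 : 0 ≤ u := hu.nonneg hterm
  have hvu : ∀ k, (1 / 2 : ℝ) ^ k • v k ≤ u := fun k => le_hasSum hu k fun j _ => hterm j
  have hv0 : ∀ k, 0 ≤ v k := fun k => (hv k).1
  refine ⟨disjointify v u, fun k => ⟨posPart_nonneg _, ?_⟩, disjointSeq_disjointify hv0 hu0 hvu,
    fun k => ?_⟩
  · exact (norm_le_norm_of_nonneg_of_le (posPart_nonneg _) (disjointify_le hv0 hu0 k)).trans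
      (hv k).2
  have hφu : (1 / 2) ^ k * φ k u ≤ (1 / 2) ^ k * (2 * M) := by
    refine mul_le_mul_of_nonneg_left ?_ (by positivity)
    calc φ k u ≤ ‖φ k‖ * 2 := (Real.le_norm_self _).trans ((φ k).le_opNorm_of_le hu2)
      _ ≤ 2 * M := by linarith [hM k]
  linarith [sub_le_apply_disjointify (v := v) (u := u) (hφ k) k, hdiag k]

end Disjointification

theorem Set.Icc_zero_add_eq {G : Type*} [AddCommGroup G] [Lattice G] [IsOrderedAddMonoid G]
    {z₁ z₂ : G} (hz₁ : 0 ≤ z₁) (hz₂ : 0 ≤ z₂) :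
    Set.Icc 0 (z₁ + z₂) = Set.Icc 0 z₁ + Set.Icc 0 z₂ := by
  refine Set.Subset.antisymm ?_ (by simpa using Set.Icc_add_Icc_subset (0 : G) z₁ 0 z₂)
  rintro w ⟨hw0, hwz⟩
  refine ⟨w ⊓ z₁, ⟨le_inf hw0 hz₁, inf_le_right⟩, w - w ⊓ z₁, ⟨sub_nonneg.2 inf_le_left, ?_⟩,
    add_sub_cancel _ _⟩
  rw [sub_le_iff_le_add, add_inf]
  exact le_inf (le_add_of_nonneg_left hz₂) (by rwa [add_comm] at hwz)

section PositiveFunctionals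

variable {E : Type*} [NormedAddCommGroup E] [Lattice E] [IsOrderedAddMonoid E] [HasSolidNorm E]
  [NormedSpace ℝ E]

theorem le_mul_norm_of_forall_norm_le_one (q : StrongDual ℝ E) {s : ℝ}
    (h : ∀ w : E, 0 ≤ w → ‖w‖ ≤ 1 → q w ≤ s) {w : E} (hw : 0 ≤ w) : q w ≤ s * ‖w‖ := by
  rcases eq_or_ne w 0 with rfl | hne
  · simp
  have hn : 0 < ‖w‖ := norm_pos_iff.2 hne
  have := h (‖w‖⁻¹ • w) (smul_nonneg (inv_nonneg.2 hn.le) hw)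
    (by rw [norm_smul, norm_inv, norm_norm, inv_mul_cancel₀ hn.ne'])
  rwa [map_smul, smul_eq_mul, inv_mul_le_iff₀ hn, mul_comm] at this

theorem PosFunctional.abs_apply_le {g : StrongDual ℝ E} (hg : PosFunctional g) (x : E) :
    |g x| ≤ g |x| := by
  have h₁ := hg _ (sub_nonneg.2 (le_abs_self x))
  have h₂ := hg _ (sub_nonneg.2 (neg_le_abs x))
  rw [map_sub] at h₁ h₂
  rw [map_neg] at h₂
  exact abs_le.2 ⟨by linarith, by linarith⟩

theorem PosFunctional.opNorm_le {q : StrongDual ℝ E} (hq : PosFunctional q) {s : ℝ} (hs : 0 ≤ s)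
    (h : ∀ w : E, 0 ≤ w → ‖w‖ ≤ 1 → q w ≤ s) : ‖q‖ ≤ s :=
  q.opNorm_le_bound hs fun x =>
    calc ‖q x‖ = |q x| := Real.norm_eq_abs _
      _ ≤ q |x| := hq.abs_apply_le x
      _ ≤ s * ‖|x|‖ := le_mul_norm_of_forall_norm_le_one q h (abs_nonneg x)
      _ = s * ‖x‖ := by rw [norm_abs_eq_norm]

theorem PosFunctional.exists_lt_apply {q : StrongDual ℝ E} (hq : PosFunctional q) {c : ℝ}
    (hc : 0 ≤ c) (h : c < ‖q‖) : ∃ b : E, 0 ≤ b ∧ ‖b‖ ≤ 1 ∧ c < q b := by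
  by_contra! hcon
  exact h.not_ge (hq.opNorm_le hc hcon)

/-- The supremum of `h` over the order interval `[0, z]`; by the Riesz–Kantorovich formula this is
the value at `z ≥ 0` of the positive part of `h` in the dual lattice. -/
def rieszSup (h : StrongDual ℝ E) (z : E) : ℝ :=
  sSup (h '' Set.Icc 0 z)

variable (h : StrongDual ℝ E)

theorem bddAbove_image_Icc (z : E) : BddAbove (h '' Set.Icc 0 z) := by
  refine ⟨‖h‖ * ‖z‖, ?_⟩
  rintro _ ⟨w, ⟨hw0, hwz⟩, rfl⟩
  exact (Real.le_norm_self _).trans (h.le_opNorm_of_le (norm_le_norm_of_nonneg_of_le hw0 hwz))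

theorem le_rieszSup {z w : E} (hw : w ∈ Set.Icc 0 z) : h w ≤ rieszSup h z :=
  le_csSup (bddAbove_image_Icc h z) (Set.mem_image_of_mem h hw)

theorem rieszSup_nonneg {z : E} (hz : 0 ≤ z) : 0 ≤ rieszSup h z := by
  simpa using le_rieszSup h (Set.left_mem_Icc.2 hz)

theorem rieszSup_le_mul_norm {ε : ℝ} (hε : 0 ≤ ε) (hb : ∀ w : E, 0 ≤ w → h w ≤ ε * ‖w‖) {z : E}
    (hz : 0 ≤ z) : rieszSup h z ≤ ε * ‖z‖ :=
  csSup_le ⟨_, Set.mem_image_of_mem h (Set.left_mem_Icc.2 hz)⟩ <| Set.forall_mem_image.2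
    fun w hw => (hb w hw.1).trans
      (mul_le_mul_of_nonneg_left (norm_le_norm_of_nonneg_of_le hw.1 hw.2) hε)

theorem rieszSup_add {z₁ z₂ : E} (hz₁ : 0 ≤ z₁) (hz₂ : 0 ≤ z₂) :
    rieszSup h (z₁ + z₂) = rieszSup h z₁ + rieszSup h z₂ := by
  rw [rieszSup, Set.Icc_zero_add_eq hz₁ hz₂, Set.image_add]
  exact csSup_add ⟨_, Set.mem_image_of_mem h (Set.left_mem_Icc.2 hz₁)⟩ (bddAbove_image_Icc h z₁)
    ⟨_, Set.mem_image_of_mem h (Set.left_mem_Icc.2 hz₂)⟩ (bddAbove_image_Icc h z₂)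

theorem rieszSup_smul {c : ℝ} (hc : 0 ≤ c) (z : E) : rieszSup h (c • z) = c * rieszSup h z := by
  rcases hc.eq_or_lt with rfl | hc
  · simp [rieszSup]
  have hIcc : Set.Icc 0 (c • z) = (c • ·) '' Set.Icc 0 z := by
    simpa using ((OrderIso.smulRight hc).image_Icc 0 z).symm
  have himage : h '' ((c • ·) '' Set.Icc 0 z) = c • h '' Set.Icc 0 z := by
    rw [Set.image_image, ← Set.image_smul, Set.image_image]
    simp only [map_smul]
  rw [rieszSup, rieszSup, hIcc, himage, Real.sSup_smul_of_nonneg hc.le, smul_eq_mul]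

theorem rieszSup_posPart_sub_negPart {x a b : E} (ha : 0 ≤ a) (hb : 0 ≤ b) (hx : x = a - b) :
    rieszSup h x⁺ - rieszSup h x⁻ = rieszSup h a - rieszSup h b := by
  have hsplit : x⁺ + b = a + x⁻ := sub_eq_sub_iff_add_eq_add.1 ((posPart_sub_negPart x).trans hx)
  have := congrArg (rieszSup h) hsplit
  rw [rieszSup_add h (posPart_nonneg x) hb, rieszSup_add h ha (negPart_nonneg x)] at this
  linarith

theorem abs_rieszSup_posPart_sub_negPart_le {ε : ℝ} (hε : 0 ≤ ε)
    (hb : ∀ w : E, 0 ≤ w → h w ≤ ε * ‖w‖) (x : E) : |rieszSup h x⁺ - rieszSup h x⁻| ≤ ε * ‖x‖ :=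
  abs_sub_le_of_nonneg_of_le (rieszSup_nonneg h (posPart_nonneg x))
    ((rieszSup_le_mul_norm h hε hb (posPart_nonneg x)).trans
      (mul_le_mul_of_nonneg_left (norm_posPart_le_norm x) hε))
    (rieszSup_nonneg h (negPart_nonneg x))
    ((rieszSup_le_mul_norm h hε hb (negPart_nonneg x)).trans
      (mul_le_mul_of_nonneg_left (norm_negPart_le_norm x) hε))

def rieszPosPartₗ : E →ₗ[ℝ] ℝ where
  toFun x := rieszSup h x⁺ - rieszSup h x⁻
  map_add' x y := by
    rw [rieszSup_posPart_sub_negPart h (add_nonneg (posPart_nonneg x) (posPart_nonneg y))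
        (add_nonneg (negPart_nonneg x) (negPart_nonneg y))
        (by rw [add_sub_add_comm, posPart_sub_negPart, posPart_sub_negPart]),
      rieszSup_add h (posPart_nonneg x) (posPart_nonneg y),
      rieszSup_add h (negPart_nonneg x) (negPart_nonneg y)]
    ring
  map_smul' c x := by
    rcases le_total 0 c with hc | hc
    · rw [rieszSup_posPart_sub_negPart h (smul_nonneg hc (posPart_nonneg x))
          (smul_nonneg hc (negPart_nonneg x)) (by rw [← smul_sub, posPart_sub_negPart]),
        rieszSup_smul h hc, rieszSup_smul h hc, RingHom.id_apply, smul_eq_mul]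
      ring
    · have hc' : 0 ≤ -c := neg_nonneg.2 hc
      rw [rieszSup_posPart_sub_negPart h (smul_nonneg hc' (negPart_nonneg x))
          (smul_nonneg hc' (posPart_nonneg x))
          (by rw [← smul_sub, ← neg_sub, posPart_sub_negPart, neg_smul_neg]),
        rieszSup_smul h hc', rieszSup_smul h hc', RingHom.id_apply, smul_eq_mul]
      ring

def rieszPosPart : StrongDual ℝ E :=
  (rieszPosPartₗ h).mkContinuous ‖h‖
    (abs_rieszSup_posPart_sub_negPart_le h (norm_nonneg h) fun w _ =>
      (Real.le_norm_self _).trans (h.le_opNorm w))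

theorem rieszPosPart_apply (x : E) : rieszPosPart h x = rieszSup h x⁺ - rieszSup h x⁻ := rfl

theorem rieszPosPart_apply_of_nonneg {z : E} (hz : 0 ≤ z) : rieszPosPart h z = rieszSup h z := by
  rw [rieszPosPart_apply, posPart_eq_self.2 hz, negPart_eq_zero.2 hz]
  simpa using rieszSup_smul h le_rfl 0

theorem posFunctional_rieszPosPart : PosFunctional (rieszPosPart h) := fun _ hz =>
  (rieszPosPart_apply_of_nonneg h hz).symm ▸ rieszSup_nonneg h hz

theorem posFunctional_rieszPosPart_sub : PosFunctional (rieszPosPart h - h) := fun z hz => by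
  rw [sub_apply, rieszPosPart_apply_of_nonneg h hz, sub_nonneg]
  exact le_rieszSup h (Set.right_mem_Icc.2 hz)

theorem norm_rieszPosPart_le {ε : ℝ} (hε : 0 ≤ ε) (hb : ∀ w : E, 0 ≤ w → h w ≤ ε * ‖w‖) :
    ‖rieszPosPart h‖ ≤ ε :=
  (rieszPosPart h).opNorm_le_bound hε (abs_rieszSup_posPart_sub_negPart_le h hε hb)

theorem exists_posFunctional_sub_eq : ∃ h₁ h₂ : StrongDual ℝ E,
    PosFunctional h₁ ∧ PosFunctional h₂ ∧ h = h₁ - h₂ :=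
  ⟨_, _, posFunctional_rieszPosPart h, posFunctional_rieszPosPart_sub h, (sub_sub_cancel _ _).symm⟩

end PositiveFunctionals

theorem exists_seq_forall_sum_range {α M : Type*} [AddCommMonoid M] (g : α → M)
    {Q : ℕ → M → α → Prop} (h : ∀ n s, ∃ a, Q n s a) :
    ∃ x : ℕ → α, ∀ n, Q n (∑ i ∈ Finset.range n, g (x i)) (x n) := by
  choose c hc using h
  let s : ℕ → M := fun n => Nat.rec 0 (fun k sk => sk + g (c k sk)) n
  have hs : ∀ n, ∑ i ∈ Finset.range n, g (c i (s i)) = s n := by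
    intro n
    induction n with
    | zero => rfl
    | succ n ih => rw [Finset.sum_range_succ, ih]
  exact ⟨fun n => c n (s n), fun n => by rw [hs]; exact hc n (s n)⟩

theorem WeakStarNull.exists_bound {E : Type*} [NormedAddCommGroup E] [NormedSpace ℝ E]
    {Φ : ℕ → StrongDual ℝ (StrongDual ℝ E)} (h : WeakStarNull Φ) : ∃ C, ∀ n, ‖Φ n‖ ≤ C :=
  banach_steinhaus fun f => by
    obtain ⟨C, hC⟩ := (h f).norm.bddAbove_range
    exact ⟨C, fun n => hC ⟨n, rfl⟩⟩

theorem PosBidual.apply_le_add {E : Type*} [NormedAddCommGroup E] [Lattice E]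
    [IsOrderedAddMonoid E] [HasSolidNorm E] [NormedSpace ℝ E]
    {x : StrongDual ℝ (StrongDual ℝ E)} (hx : PosBidual x) {q f : StrongDual ℝ E} {ε : ℝ}
    (hε : 0 ≤ ε) (h : ∀ w, 0 ≤ w → q w ≤ f w + ε * ‖w‖) : x q ≤ x f + ‖x‖ * ε := by
  set r := rieszPosPart (q - f)
  have hr : ‖r‖ ≤ ε := norm_rieszPosPart_le _ hε fun w hw => by
    rw [sub_apply]; linarith [h w hw]
  have hdom : PosFunctional (f - (q - r)) := fun w hw => by
    have := posFunctional_rieszPosPart_sub (q - f) w hw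
    simp only [sub_apply] at this ⊢
    linarith
  have h₁ := hx _ hdom
  have h₂ : x r ≤ ‖x‖ * ε := (Real.le_norm_self _).trans (x.le_opNorm_of_le hr)
  rw [map_sub, map_sub] at h₁
  linarith

/-- Equivalently (Meyer-Nieberg, Theorem 2.4.14), the dual `E*` has order continuous norm. -/
def BddDisjointPosWeaklyNull (E : Type*) [NormedAddCommGroup E] [Lattice E] [IsOrderedAddMonoid E]
    [HasSolidNorm E] [NormedSpace ℝ E] : Prop :=
  ∀ x : ℕ → E, (∀ n, 0 ≤ x n) → (∃ C, ∀ n, ‖x n‖ ≤ C) → DisjointSeq x → WeaklyNull x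

section Bilinear

variable {E₁ E₂ F : Type*} [NormedAddCommGroup E₁] [NormedSpace ℝ E₁]
  [NormedAddCommGroup E₂] [NormedSpace ℝ E₂] [NormedAddCommGroup F] [NormedSpace ℝ F]

def IsPositiveBilinear [Preorder E₁] [Preorder E₂] [Preorder F] (A : E₁ →L[ℝ] E₂ →L[ℝ] F) :
    Prop :=
  ∀ x y, 0 ≤ x → 0 ≤ y → 0 ≤ A x y

theorem IsPositiveBilinear.flip [Preorder E₁] [Preorder E₂] [Preorder F]
    {A : E₁ →L[ℝ] E₂ →L[ℝ] F} (hA : IsPositiveBilinear A) : IsPositiveBilinear A.flip :=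
  fun y x hy hx => hA x y hx hy

theorem IsPositiveBilinear.comp [Preorder E₁] [Preorder E₂] [Lattice F] [IsOrderedAddMonoid F]
    [HasSolidNorm F] {A : E₁ →L[ℝ] E₂ →L[ℝ] F} (hA : IsPositiveBilinear A) {g : StrongDual ℝ F}
    (hg : PosFunctional g) : IsPositiveBilinear ((ContinuousLinearMap.compL ℝ E₂ F ℝ g).comp A) :=
  fun x y hx hy => hg _ (hA x y hx hy)

variable [Lattice E₁] [IsOrderedAddMonoid E₁] [HasSolidNorm E₁]
  [Lattice E₂] [IsOrderedAddMonoid E₂] [HasSolidNorm E₂]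

def IsAlmostDunfordPettis (A : E₁ →L[ℝ] E₂ →L[ℝ] F) : Prop :=
  ∀ (x : ℕ → E₁) (y : ℕ → E₂), DisjointSeq x → WeaklyNull x → DisjointSeq y → WeaklyNull y →
    Tendsto (fun n => ‖A (x n) (y n)‖) atTop (𝓝 0)

theorem IsAlmostDunfordPettis.flip {A : E₁ →L[ℝ] E₂ →L[ℝ] F} (hA : IsAlmostDunfordPettis A) :
    IsAlmostDunfordPettis A.flip :=
  fun y x hdy hwy hdx hwx => hA x y hdx hwx hdy hwy

theorem IsAlmostDunfordPettis.comp {A : E₁ →L[ℝ] E₂ →L[ℝ] F} (hA : IsAlmostDunfordPettis A)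
    (g : StrongDual ℝ F) : IsAlmostDunfordPettis ((ContinuousLinearMap.compL ℝ E₂ F ℝ g).comp A) :=
  fun x y hdx hwx hdy hwy => squeeze_zero (fun _ => norm_nonneg _) (fun n => g.le_opNorm _)
    (by simpa using (hA x y hdx hwx hdy hwy).const_mul ‖g‖)

end Bilinear

section Domination

variable {E₁ E₂ : Type*}
  [NormedAddCommGroup E₁] [Lattice E₁] [IsOrderedAddMonoid E₁] [HasSolidNorm E₁] [NormedSpace ℝ E₁]
  [NormedAddCommGroup E₂] [Lattice E₂] [IsOrderedAddMonoid E₂] [NormedSpace ℝ E₂]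
  {K : E₁ →L[ℝ] E₂ →L[ℝ] ℝ}

theorem exists_seq_large_diagonal (hK : IsPositiveBilinear K) {δ : ℝ}
    (hpair : ∀ f : StrongDual ℝ E₁, PosFunctional f →
      ∃ w b, 0 ≤ w ∧ ‖w‖ ≤ 1 ∧ 0 ≤ b ∧ ‖b‖ ≤ 1 ∧ f w + δ < K w b) :
    ∃ (w : ℕ → E₁) (b : ℕ → E₂), (∀ k, 0 ≤ w k ∧ ‖w k‖ ≤ 1) ∧ (∀ k, 0 ≤ b k ∧ ‖b k‖ ≤ 1) ∧
      ∀ k, δ ≤ K (w k) (b k) - 4 ^ k * ∑ i ∈ Finset.range k, K (w k) (b i) := by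
  -- `s⁺` keeps the functional positive for every `s`; the partial sums that occur are positive.
  obtain ⟨p, hp⟩ := exists_seq_forall_sum_range (Prod.snd : E₁ × E₂ → E₂)
    (Q := fun n s p =>
      0 ≤ p.1 ∧ ‖p.1‖ ≤ 1 ∧ 0 ≤ p.2 ∧ ‖p.2‖ ≤ 1 ∧ (4 : ℝ) ^ n * K p.1 s⁺ + δ < K p.1 p.2)
    fun n s => by
      obtain ⟨w, b, hw, hw1, hb, hb1, hlt⟩ := hpair ((4 : ℝ) ^ n • K.flip s⁺)
        fun z hz => by
          rw [smul_apply, smul_eq_mul]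
          exact mul_nonneg (by positivity) (hK z s⁺ hz (posPart_nonneg s))
      exact ⟨(w, b), hw, hw1, hb, hb1, by simpa using hlt⟩
  refine ⟨fun k => (p k).1, fun k => (p k).2, fun k => ⟨(hp k).1, (hp k).2.1⟩,
    fun k => ⟨(hp k).2.2.1, (hp k).2.2.2.1⟩, fun k => ?_⟩
  have hlt := (hp k).2.2.2.2
  rw [posPart_eq_self.2 (Finset.sum_nonneg fun i _ => (hp i).2.2.1), map_sum] at hlt
  linarith

variable [HasSolidNorm E₂]

theorem exists_unit_pair_of_lt (hK : IsPositiveBilinear K) {f : StrongDual ℝ E₁}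
    (hf : PosFunctional f) {δ : ℝ} (hδ : 0 < δ) {w : E₁} (hw : 0 ≤ w)
    (hlt : f w + δ * ‖w‖ < ‖K w‖) :
    ∃ w' b, 0 ≤ w' ∧ ‖w'‖ ≤ 1 ∧ 0 ≤ b ∧ ‖b‖ ≤ 1 ∧ f w' + δ < K w' b := by
  have hn : 0 < ‖w‖ := norm_pos_iff.2 (by rintro rfl; simp at hlt)
  set w' := ‖w‖⁻¹ • w
  have hw' : 0 ≤ w' := smul_nonneg (inv_nonneg.2 hn.le) hw
  have hlt' : f w' + δ < ‖K w'‖ := by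
    have hfw' : f w' + δ = ‖w‖⁻¹ * (f w + δ * ‖w‖) := by
      simp only [w', map_smul, smul_eq_mul]; field_simp
    rw [hfw', show ‖K w'‖ = ‖w‖⁻¹ * ‖K w‖ by simp [w', norm_smul]]
    exact mul_lt_mul_of_pos_left hlt (inv_pos.2 hn)
  have hKw' : PosFunctional (K w') := fun b hb => hK _ _ hw' hb
  obtain ⟨b, hb, hb1, hKb⟩ := hKw'.exists_lt_apply (by linarith [hf w' hw']) hlt'
  exact ⟨w', b, hw', by simp [w', norm_smul, hn.ne'], hb, hb1, hKb⟩

variable [CompleteSpace E₁]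

theorem not_isAlmostDunfordPettis_of_diagonal (hE₁ : BddDisjointPosWeaklyNull E₁)
    (hE₂ : BddDisjointPosWeaklyNull E₂) (hK : IsPositiveBilinear K) {w : ℕ → E₁} {D : ℕ → E₂}
    (hw : ∀ k, 0 ≤ w k ∧ ‖w k‖ ≤ 1) (hD : ∀ k, 0 ≤ D k ∧ ‖D k‖ ≤ 1) (hDdisj : DisjointSeq D)
    {δ : ℝ} (hδ : 0 < δ) (hdiag : ∀ k, δ - (1 / 2) ^ k * (2 * ‖K‖) ≤ K (w k) (D k)) :
    ¬ IsAlmostDunfordPettis K := by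
  intro hKdp
  have hDnull : WeaklyNull D := hE₂ D (fun k => (hD k).1) ⟨1, fun k => (hD k).2⟩ hDdisj
  -- A subsequence `j` along which the earlier `w (j i)` hardly see `D (j n)`; summing the indices
  -- alongside the vectors and requiring `j n` to exceed that sum makes `j` strictly increasing.
  obtain ⟨j, hj⟩ := exists_seq_forall_sum_range (fun m : ℕ => (w m, m))
    (Q := fun n s m => s.2 < m ∧ (4 : ℝ) ^ n * K s.1 (D m) < δ / 2) fun n s =>
      have hsmall := ((hDnull (K s.1)).const_mul ((4 : ℝ) ^ n)).eventually_lt_const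
        (by simpa using half_pos hδ)
      ((eventually_gt_atTop s.2).and hsmall).exists
  simp only [Prod.fst_sum, Prod.snd_sum, map_sum, sum_apply] at hj
  have hjmono : StrictMono j := strictMono_nat_of_lt_succ fun n =>
    (Finset.single_le_sum (fun i _ => Nat.zero_le (j i)) (Finset.self_mem_range_succ n)).trans_lt
      (hj (n + 1)).1
  have hDj : DisjointSeq (D ∘ j) := fun n k hnk => hDdisj _ _ (hjmono.injective.ne hnk)
  have hKflip : ∀ k, ‖K.flip (D (j k))‖ ≤ ‖K‖ := fun k =>
    (K.flip.le_opNorm_of_le (hD (j k)).2).trans_eq (by rw [K.opNorm_flip, mul_one])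
  obtain ⟨a, ha, hadisj, hlow⟩ := exists_disjoint_of_diagonal_dominant
    (φ := fun k => K.flip (D (j k))) (fun k z hz => hK z _ hz (hD _).1) hKflip (fun k => hw (j k))
    (δ := fun k => δ / 2 - (1 / 2) ^ j k * (2 * ‖K‖)) fun k => by
      simp only [ContinuousLinearMap.flip_apply]
      linarith [hdiag (j k), (hj k).2]
  have hconv := hKdp a (D ∘ j) hadisj (hE₁ a (fun k => (ha k).1) ⟨1, fun k => (ha k).2⟩ hadisj)
    hDj (hE₂ _ (fun k => (hD _).1) ⟨1, fun k => (hD _).2⟩ hDj)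
  have hhalf := tendsto_pow_atTop_nhds_zero_of_lt_one (by norm_num : (0 : ℝ) ≤ 1 / 2) (by norm_num)
  have hlim : Tendsto (fun k => δ / 2 - (1 / 2) ^ j k * (2 * ‖K‖) - (1 / 2) ^ k * (2 * ‖K‖))
      atTop (𝓝 (δ / 2)) := by
    simpa using ((tendsto_const_nhds.sub ((hhalf.comp hjmono.tendsto_atTop).mul_const _)).sub
      (hhalf.mul_const _))
  have := le_of_tendsto_of_tendsto' hlim hconv fun k => (hlow k).trans (Real.le_norm_self _)
  linarith

variable [CompleteSpace E₂]

theorem exists_posFunctional_dominating (hE₁ : BddDisjointPosWeaklyNull E₁)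
    (hE₂ : BddDisjointPosWeaklyNull E₂) (hK : IsPositiveBilinear K) (hKdp : IsAlmostDunfordPettis K)
    {δ : ℝ} (hδ : 0 < δ) :
    ∃ f : StrongDual ℝ E₁, PosFunctional f ∧ ∀ w, 0 ≤ w → ‖K w‖ ≤ f w + δ * ‖w‖ := by
  by_contra! hcon
  obtain ⟨w, b, hw, hb, hdiag⟩ := exists_seq_large_diagonal hK fun f hf => by
    obtain ⟨w, hw, hlt⟩ := hcon f hf
    exact exists_unit_pair_of_lt hK hf hδ hw hlt
  obtain ⟨D, hD, hDdisj, hlow⟩ := exists_disjoint_of_diagonal_dominant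
    (fun k z hz => hK _ z (hw k).1 hz) (fun k => K.le_opNorm_of_le (hw k).2 |>.trans_eq (mul_one _))
    hb (δ := fun _ => δ) hdiag
  exact not_isAlmostDunfordPettis_of_diagonal hE₁ hE₂ hK hw hD hDdisj hδ hlow hKdp

end Domination

theorem tendsto_zero_of_forall_le_add {a : ℕ → ℝ} (h0 : ∀ n, 0 ≤ a n)
    (h : ∀ δ > 0, ∃ b : ℕ → ℝ, Tendsto b atTop (𝓝 0) ∧ ∀ n, a n ≤ b n + δ) :
    Tendsto a atTop (𝓝 0) := by
  refine tendsto_order.2 ⟨fun c hc => Eventually.of_forall fun n => hc.trans_le (h0 n),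
    fun ε hε => ?_⟩
  obtain ⟨b, hb, hab⟩ := h (ε / 2) (half_pos hε)
  filter_upwards [hb.eventually_lt_const (half_pos hε)] with n hn
  linarith [hab n]

section ArensExtension

variable {E₁ E₂ F : Type*}
  [NormedAddCommGroup E₁] [Lattice E₁] [IsOrderedAddMonoid E₁] [HasSolidNorm E₁] [NormedSpace ℝ E₁]
  [NormedAddCommGroup E₂] [Lattice E₂] [IsOrderedAddMonoid E₂] [HasSolidNorm E₂] [NormedSpace ℝ E₂]
  [NormedAddCommGroup F] [Lattice F] [IsOrderedAddMonoid F] [HasSolidNorm F] [NormedSpace ℝ F]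
  {K : E₁ →L[ℝ] E₂ →L[ℝ] ℝ} {A : E₁ →L[ℝ] E₂ →L[ℝ] F}
  {xbb : ℕ → StrongDual ℝ (StrongDual ℝ E₁)} {ybb : ℕ → StrongDual ℝ (StrongDual ℝ E₂)}

theorem PosBidual.posFunctional_comp (hK : IsPositiveBilinear K)
    {y : StrongDual ℝ (StrongDual ℝ E₂)} (hy : PosBidual y) : PosFunctional (y.comp K) :=
  fun z hz => hy (K z) fun w hw => hK z w hz hw

theorem PosBidual.arensBil (hA : IsPositiveBilinear A) {x : StrongDual ℝ (StrongDual ℝ E₁)}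
    {y : StrongDual ℝ (StrongDual ℝ E₂)} (hx : PosBidual x) (hy : PosBidual y) :
    PosBidual (arensBil A x y) :=
  fun _ hg => hx _ (hy.posFunctional_comp (hA.comp hg))

variable [CompleteSpace E₁] [CompleteSpace E₂]

theorem tendsto_apply_comp_of_weakStarNull_left (hE₁ : BddDisjointPosWeaklyNull E₁)
    (hE₂ : BddDisjointPosWeaklyNull E₂) (hK : IsPositiveBilinear K) (hKdp : IsAlmostDunfordPettis K)
    (hx : ∀ n, PosBidual (xbb n)) (hy : ∀ n, PosBidual (ybb n)) {C : ℝ} (hC : 0 < C)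
    (hxC : ∀ n, ‖xbb n‖ ≤ C) (hyC : ∀ n, ‖ybb n‖ ≤ C) (hxnull : WeakStarNull xbb) :
    Tendsto (fun n => xbb n ((ybb n).comp K)) atTop (𝓝 0) := by
  refine tendsto_zero_of_forall_le_add (fun n => hx n _ ((hy n).posFunctional_comp hK))
    fun δ hδ => ?_
  set η := δ / (C * C)
  obtain ⟨f, -, hf⟩ := exists_posFunctional_dominating hE₁ hE₂ hK hKdp (by positivity : 0 < η)
  refine ⟨fun n => xbb n (C • f), hxnull (C • f), fun n => ?_⟩
  have hq : ∀ w, 0 ≤ w → (ybb n).comp K w ≤ (C • f) w + C * η * ‖w‖ := fun w hw =>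
    calc ybb n (K w) ≤ ‖ybb n‖ * ‖K w‖ := (Real.le_norm_self _).trans ((ybb n).le_opNorm _)
      _ ≤ C * (f w + η * ‖w‖) := mul_le_mul (hyC n) (hf w hw) (norm_nonneg _) hC.le
      _ = (C • f) w + C * η * ‖w‖ := by rw [smul_apply, smul_eq_mul]; ring
  calc xbb n ((ybb n).comp K) ≤ xbb n (C • f) + ‖xbb n‖ * (C * η) :=
        (hx n).apply_le_add (by positivity) hq
    _ ≤ xbb n (C • f) + C * (C * η) := by gcongr; exact hxC n
    _ = xbb n (C • f) + δ := by simp only [η]; field_simp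

theorem tendsto_apply_comp_of_weakStarNull_right (hE₁ : BddDisjointPosWeaklyNull E₁)
    (hE₂ : BddDisjointPosWeaklyNull E₂) (hK : IsPositiveBilinear K) (hKdp : IsAlmostDunfordPettis K)
    (hx : ∀ n, PosBidual (xbb n)) (hy : ∀ n, PosBidual (ybb n)) {C : ℝ} (hC : 0 < C)
    (hxC : ∀ n, ‖xbb n‖ ≤ C) (hyC : ∀ n, ‖ybb n‖ ≤ C) (hynull : WeakStarNull ybb) :
    Tendsto (fun n => xbb n ((ybb n).comp K)) atTop (𝓝 0) := by
  refine tendsto_zero_of_forall_le_add (fun n => hx n _ ((hy n).posFunctional_comp hK))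
    fun δ hδ => ?_
  set η := δ / (C * C)
  obtain ⟨f, hfpos, hf⟩ :=
    exists_posFunctional_dominating hE₂ hE₁ hK.flip hKdp.flip (by positivity : 0 < η)
  refine ⟨fun n => C * ybb n f, by simpa using (hynull f).const_mul C, fun n => ?_⟩
  have hq : ‖(ybb n).comp K‖ ≤ ybb n f + C * η := by
    refine ((hy n).posFunctional_comp hK).opNorm_le
      (add_nonneg (hy n f hfpos) (by positivity)) fun w hw hw1 => ?_
    have hKw : ∀ b, 0 ≤ b → K w b ≤ f b + η * ‖b‖ := fun b hb =>
      calc K w b = K.flip b w := rfl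
        _ ≤ ‖K.flip b‖ * 1 := (Real.le_norm_self _).trans ((K.flip b).le_opNorm_of_le hw1)
        _ ≤ f b + η * ‖b‖ := by rw [mul_one]; exact hf b hb
    calc (ybb n).comp K w = ybb n (K w) := rfl
      _ ≤ ybb n f + ‖ybb n‖ * η := (hy n).apply_le_add (by positivity) hKw
      _ ≤ ybb n f + C * η := by gcongr; exact hyC n
  calc xbb n ((ybb n).comp K) ≤ ‖xbb n‖ * ‖(ybb n).comp K‖ :=
        (Real.le_norm_self _).trans ((xbb n).le_opNorm _)
    _ ≤ C * (ybb n f + C * η) := mul_le_mul (hxC n) hq (norm_nonneg _) hC.le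
    _ = C * ybb n f + δ := by simp only [η]; field_simp

theorem tendsto_apply_comp (hE₁ : BddDisjointPosWeaklyNull E₁)
    (hE₂ : BddDisjointPosWeaklyNull E₂) (hK : IsPositiveBilinear K) (hKdp : IsAlmostDunfordPettis K)
    (hx : ∀ n, PosBidual (xbb n)) (hy : ∀ n, PosBidual (ybb n))
    (hside : (WeakStarNull xbb ∧ ∃ C, ∀ n, ‖ybb n‖ ≤ C) ∨
      ((∃ C, ∀ n, ‖xbb n‖ ≤ C) ∧ WeakStarNull ybb)) :
    Tendsto (fun n => xbb n ((ybb n).comp K)) atTop (𝓝 0) := by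
  obtain ⟨Cx, hCx⟩ : ∃ C, ∀ n, ‖xbb n‖ ≤ C := hside.elim (·.1.exists_bound) (·.1)
  obtain ⟨Cy, hCy⟩ : ∃ C, ∀ n, ‖ybb n‖ ≤ C := hside.elim (·.2) (·.2.exists_bound)
  have hC : 0 < max (max Cx Cy) 1 := lt_max_of_lt_right one_pos
  have hxC n : ‖xbb n‖ ≤ max (max Cx Cy) 1 := (hCx n).trans (le_max_of_le_left (le_max_left _ _))
  have hyC n : ‖ybb n‖ ≤ max (max Cx Cy) 1 := (hCy n).trans (le_max_of_le_left (le_max_right _ _))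
  rcases hside with ⟨hxnull, -⟩ | ⟨-, hynull⟩
  · exact tendsto_apply_comp_of_weakStarNull_left hE₁ hE₂ hK hKdp hx hy hC hxC hyC hxnull
  · exact tendsto_apply_comp_of_weakStarNull_right hE₁ hE₂ hK hKdp hx hy hC hxC hyC hynull

theorem tendsto_norm_arensBil (hE₁ : BddDisjointPosWeaklyNull E₁)
    (hE₂ : BddDisjointPosWeaklyNull E₂)
    (hF : ∀ φ : ℕ → StrongDual ℝ (StrongDual ℝ F), (∀ n, PosBidual (φ n)) → WeakStarNull φ →
      Tendsto (fun n => ‖φ n‖) atTop (𝓝 0))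
    (hA : IsPositiveBilinear A) (hAdp : IsAlmostDunfordPettis A)
    (hx : ∀ n, PosBidual (xbb n)) (hy : ∀ n, PosBidual (ybb n))
    (hside : (WeakStarNull xbb ∧ ∃ C, ∀ n, ‖ybb n‖ ≤ C) ∨
      ((∃ C, ∀ n, ‖xbb n‖ ≤ C) ∧ WeakStarNull ybb)) :
    Tendsto (fun n => ‖arensBil A (xbb n) (ybb n)‖) atTop (𝓝 0) := by
  refine hF _ (fun n => (hx n).arensBil hA (hy n)) fun g => ?_
  obtain ⟨g₁, g₂, hg₁, hg₂, rfl⟩ := exists_posFunctional_sub_eq g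
  have h₁ := tendsto_apply_comp hE₁ hE₂ (hA.comp hg₁) (hAdp.comp g₁) hx hy hside
  have h₂ := tendsto_apply_comp hE₁ hE₂ (hA.comp hg₂) (hAdp.comp g₂) hx hy hside
  simpa only [map_sub, arensBil_apply, sub_zero] using h₁.sub h₂

end ArensExtension

theorem aronBerner_weakly_positively_limited_vector_general {E₁ E₂ F : Type*}
    [NormedAddCommGroup E₁] [Lattice E₁] [IsOrderedAddMonoid E₁] [HasSolidNorm E₁] [NormedSpace ℝ E₁] [CompleteSpace E₁]
    [NormedAddCommGroup E₂] [Lattice E₂] [IsOrderedAddMonoid E₂] [HasSolidNorm E₂] [NormedSpace ℝ E₂] [CompleteSpace E₂]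
    [NormedAddCommGroup F] [Lattice F] [IsOrderedAddMonoid F] [HasSolidNorm F] [NormedSpace ℝ F]
    (hE₁ : ∀ x : ℕ → E₁, (∀ n, 0 ≤ x n) → (∃ C, ∀ n, ‖x n‖ ≤ C) → DisjointSeq x →
      WeaklyNull x)
    (hE₂ : ∀ y : ℕ → E₂, (∀ n, 0 ≤ y n) → (∃ C, ∀ n, ‖y n‖ ≤ C) → DisjointSeq y →
      WeaklyNull y)
    -- `F*` has the dual positive Schur property
    (hF : ∀ φ : ℕ → StrongDual ℝ (StrongDual ℝ F), (∀ n, PosBidual (φ n)) →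
      (∀ f : StrongDual ℝ F, Tendsto (fun n => φ n f) atTop (𝓝 0)) →
      Tendsto (fun n => ‖φ n‖) atTop (𝓝 0))
    (A : E₁ →L[ℝ] E₂ →L[ℝ] F)
    (hApos : ∀ (x : E₁) (y : E₂), 0 ≤ x → 0 ≤ y → 0 ≤ A x y)
    (hADP : ∀ (x : ℕ → E₁) (y : ℕ → E₂), DisjointSeq x → WeaklyNull x →
      DisjointSeq y → WeaklyNull y → Tendsto (fun n => ‖A (x n) (y n)‖) atTop (𝓝 0)) :
    ∀ (xbb : ℕ → StrongDual ℝ (StrongDual ℝ E₁)) (ybb : ℕ → StrongDual ℝ (StrongDual ℝ E₂)),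
      (∀ n, PosBidual (xbb n)) → (∀ n, PosBidual (ybb n)) →
      ((WeakStarNull xbb ∧ ∃ C, ∀ n, ‖ybb n‖ ≤ C) ∨
        ((∃ C, ∀ n, ‖xbb n‖ ≤ C) ∧ WeakStarNull ybb)) →
      Tendsto (fun n => ‖arensBil A (xbb n) (ybb n)‖) atTop (𝓝 0) ∧
        Tendsto (fun n => ‖arensBil A.flip (ybb n) (xbb n)‖) atTop (𝓝 0) := by
  intro xbb ybb hx hy hside
  exact ⟨tendsto_norm_arensBil hE₁ hE₂ hF hApos hADP hx hy hside,
    tendsto_norm_arensBil hE₂ hE₁ hF (IsPositiveBilinear.flip hApos)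
      (IsAlmostDunfordPettis.flip hADP) hy hx (hside.symm.imp And.symm And.symm)⟩

/-- If the norms of `E₁*` and `E₂*` are order continuous (in sequential form) and `F*` has
the dual positive Schur property, then both Aron-Berner extensions of a positive almost
Dunford-Pettis continuous bilinear operator `A : E₁ × E₂ → F` are weakly positively
limited. -/
theorem aronBerner_weakly_positively_limited_vector {E₁ E₂ F : Type*}
    [NormedAddCommGroup E₁] [Lattice E₁] [IsOrderedAddMonoid E₁] [HasSolidNorm E₁] [NormedSpace ℝ E₁] [CompleteSpace E₁]
    [NormedAddCommGroup E₂] [Lattice E₂] [IsOrderedAddMonoid E₂] [HasSolidNorm E₂] [NormedSpace ℝ E₂] [CompleteSpace E₂]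
    [NormedAddCommGroup F] [Lattice F] [IsOrderedAddMonoid F] [HasSolidNorm F] [NormedSpace ℝ F] [CompleteSpace F]
    (hE₁ : ∀ x : ℕ → E₁, (∀ n, 0 ≤ x n) → (∃ C, ∀ n, ‖x n‖ ≤ C) → DisjointSeq x →
      WeaklyNull x)
    (hE₂ : ∀ y : ℕ → E₂, (∀ n, 0 ≤ y n) → (∃ C, ∀ n, ‖y n‖ ≤ C) → DisjointSeq y →
      WeaklyNull y)
    -- `F*` has the dual positive Schur property
    (hF : ∀ φ : ℕ → StrongDual ℝ (StrongDual ℝ F), (∀ n, PosBidual (φ n)) →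
      (∀ f : StrongDual ℝ F, Tendsto (fun n => φ n f) atTop (𝓝 0)) →
      Tendsto (fun n => ‖φ n‖) atTop (𝓝 0))
    (A : E₁ →L[ℝ] E₂ →L[ℝ] F)
    (hApos : ∀ (x : E₁) (y : E₂), 0 ≤ x → 0 ≤ y → 0 ≤ A x y)
    (hADP : ∀ (x : ℕ → E₁) (y : ℕ → E₂), DisjointSeq x → WeaklyNull x →
      DisjointSeq y → WeaklyNull y → Tendsto (fun n => ‖A (x n) (y n)‖) atTop (𝓝 0)) :
    ∀ (xbb : ℕ → StrongDual ℝ (StrongDual ℝ E₁)) (ybb : ℕ → StrongDual ℝ (StrongDual ℝ E₂)),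
      (∀ n, PosBidual (xbb n)) → (∀ n, PosBidual (ybb n)) →
      ((WeakStarNull xbb ∧ ∃ C, ∀ n, ‖ybb n‖ ≤ C) ∨
        ((∃ C, ∀ n, ‖xbb n‖ ≤ C) ∧ WeakStarNull ybb)) →
      Tendsto (fun n => ‖arensBil A (xbb n) (ybb n)‖) atTop (𝓝 0) ∧
        Tendsto (fun n => ‖arensBil A.flip (ybb n) (xbb n)‖) atTop (𝓝 0) :=
  aronBerner_weakly_positively_limited_vector_general hE₁ hE₂ hF A hApos hADP

end
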